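/- The quotient of the free associative k-algebra on generators x, y by the two-sided ideal generated by x^2 + 2ξ·y^2, xy + yx, and x^4 has dimension 8 over k, with linear basis {x^m y^n : 0 ≤ m ≤ 3, 0 ≤ n ≤ 1}. (This algebra is the Nichols algebra B(V_{1,j}) for j ∈ {1,3}.) -/

import Mathlib

noncomputable section

/-- Generators of the Nichols algebra `B(V_{1,j})`. -/
inductive NGen : Type
  | x | y

variable (k : Type) [Field k] (ξ : k)

namespace NGen

/-- Shorthand for the generator `x` of the free algebra. -/
abbrev X : FreeAlgebra k NGen := FreeAlgebra.ι k NGen.x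
/-- Shorthand for the generator `y` of the free algebra. -/
abbrev Y : FreeAlgebra k NGen := FreeAlgebra.ι k NGen.y

end NGen

open NGen

/-- The defining relations of `B(V_{1,j})`:
`x² + 2ξ·y² = 0`, `xy + yx = 0`, `x⁴ = 0`. -/
inductive NRel : FreeAlgebra k NGen → FreeAlgebra k NGen → Prop
  | r1 : NRel (X k ^ 2 + (2 * ξ) • (Y k ^ 2)) 0
  | r2 : NRel (X k * Y k + Y k * X k) 0
  | r3 : NRel (X k ^ 4) 0

/-- The Nichols algebra `B(V_{1,j})` (`j ∈ {1,3}`) as an algebra. -/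
abbrev NAlg : Type := RingQuot (NRel k ξ)

/-- The image of `x` in the quotient. -/
def xN : NAlg k ξ := RingQuot.mkAlgHom k (NRel k ξ) (X k)
/-- The image of `y` in the quotient. -/
def yN : NAlg k ξ := RingQuot.mkAlgHom k (NRel k ξ) (Y k)

/-!
The relations give `yx = -xy`, `y² = -(2ξ)⁻¹ x²` and `x⁴ = 0`, so the span of the eight
monomials `xᵐ yⁿ` (`m < 4`, `n < 2`) is stable under right multiplication by `x` and `y`; as it
contains `1`, it is the whole algebra.

For independence, let `t` be the class of `X` in `k[X]/(X⁴)`. Sending `x ↦ diag(t, -t)` and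
`y ↦ [[0, 1], [-(2ξ)⁻¹ t², 0]]` respects the relations, and the first row of the image of `xᵐ yⁿ`
is `tᵐ eₙ`. Since `1, t, t², t³` are linearly independent, so are the eight monomials.
-/

theorem Submodule.eq_top_of_one_mem_of_mul_mem {R A : Type*} [CommSemiring R] [Semiring A]
    [Algebra R A] {s : Set A} (hs : Algebra.adjoin R s = ⊤) {S : Submodule R A} (h1 : 1 ∈ S)
    (hmul : ∀ a ∈ S, ∀ g ∈ s, a * g ∈ S) : S = ⊤ := by
  have key : ∀ b, ∀ a ∈ S, a * b ∈ S := by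
    intro b
    induction (hs ▸ Algebra.mem_top : b ∈ Algebra.adjoin R s) using Algebra.adjoin_induction with
    | mem g hg => exact fun a ha => hmul a ha g hg
    | algebraMap r =>
      exact fun a ha => by rw [← Algebra.commutes, ← Algebra.smul_def]; exact S.smul_mem r ha
    | add b c _ _ hb hc => exact fun a ha => by rw [mul_add]; exact add_mem (hb a ha) (hc a ha)
    | mul b c _ _ hb hc => exact fun a ha => by rw [← mul_assoc]; exact hc _ (hb a ha)
  exact eq_top_iff.2 fun b _ => one_mul b ▸ key b 1 h1

theorem LinearIndependent.pi_single_prod {R M ι κ : Type*} [Semiring R] [AddCommMonoid M]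
    [Module R M] [DecidableEq κ] {v : ι → M} (hv : LinearIndependent R v) :
    LinearIndependent R fun p : ι × κ => (Pi.single p.2 (v p.1) : κ → M) :=
  (linearIndependent_equiv' ((Equiv.sigmaEquivProd κ ι).trans (Equiv.prodComm κ ι))
    (f := fun p : ι × κ => (Pi.single p.2 (v p.1) : κ → M)) rfl).1
    (Pi.linearIndependent_single (fun _ : κ => v) fun _ => hv)

def xyMonomial (p : Fin 4 × Fin 2) : NAlg k ξ := xN k ξ ^ (p.1 : ℕ) * yN k ξ ^ (p.2 : ℕ)

section

variable {k ξ} {A : Type*} [CommRing A] [Algebra k A]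

theorem adjoin_xN_yN : Algebra.adjoin k {xN k ξ, yN k ξ} = ⊤ := by
  have h : {xN k ξ, yN k ξ} = RingQuot.mkAlgHom k (NRel k ξ) '' Set.range (FreeAlgebra.ι k) := by
    rw [← Set.range_comp]
    ext a
    constructor
    · rintro (rfl | rfl)
      exacts [⟨NGen.x, rfl⟩, ⟨NGen.y, rfl⟩]
    · rintro ⟨_ | _, rfl⟩
      exacts [Or.inl rfl, Or.inr rfl]
  rw [h, Algebra.adjoin_image, FreeAlgebra.adjoin_range_ι, Algebra.map_top,
    AlgHom.range_eq_top]
  exact RingQuot.mkAlgHom_surjective k (NRel k ξ)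

theorem xN_sq_add_smul_yN_sq : xN k ξ ^ 2 + (2 * ξ) • yN k ξ ^ 2 = 0 := by
  simpa only [map_add, map_pow, map_smul, map_zero, xN, yN] using
    RingQuot.mkAlgHom_rel k (NRel.r1 (k := k) (ξ := ξ))

theorem xN_mul_yN_add_yN_mul_xN : xN k ξ * yN k ξ + yN k ξ * xN k ξ = 0 := by
  simpa only [map_add, map_mul, map_zero, xN, yN] using
    RingQuot.mkAlgHom_rel k (NRel.r2 (k := k) (ξ := ξ))

theorem xN_pow_four : xN k ξ ^ 4 = 0 := by
  simpa only [map_pow, map_zero, xN] using RingQuot.mkAlgHom_rel k (NRel.r3 (k := k) (ξ := ξ))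

theorem yN_sq (hξ : 2 * ξ ≠ 0) : yN k ξ ^ 2 = (-(2 * ξ)⁻¹) • xN k ξ ^ 2 := by
  calc yN k ξ ^ 2 = (2 * ξ)⁻¹ • (2 * ξ) • yN k ξ ^ 2 := (inv_smul_smul₀ hξ _).symm
    _ = (2 * ξ)⁻¹ • -xN k ξ ^ 2 := congrArg _ (eq_neg_of_add_eq_zero_right xN_sq_add_smul_yN_sq)
    _ = (-(2 * ξ)⁻¹) • xN k ξ ^ 2 := (smul_neg _ _).trans (neg_smul _ _).symm

theorem yN_mul_xN : yN k ξ * xN k ξ = (-1 : k) • (xN k ξ * yN k ξ) :=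
  (eq_neg_of_add_eq_zero_right xN_mul_yN_add_yN_mul_xN).trans (neg_one_smul k _).symm

theorem span_xyMonomial_eq_top (hξ : 2 * ξ ≠ 0) :
    Submodule.span k (Set.range (xyMonomial k ξ)) = ⊤ := by
  set S := Submodule.span k (Set.range (xyMonomial k ξ))
  have mem : ∀ (m : ℕ) (n : Fin 2), xN k ξ ^ m * yN k ξ ^ (n : ℕ) ∈ S := by
    intro m n
    rcases lt_or_ge m 4 with hm | hm
    · exact Submodule.subset_span ⟨(⟨m, hm⟩, n), rfl⟩
    · rw [← Nat.sub_add_cancel hm, pow_add, xN_pow_four, mul_zero, zero_mul]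
      exact S.zero_mem
  have mem_x (m : ℕ) : xN k ξ ^ m ∈ S := by simpa using mem m 0
  have mem_xy (m : ℕ) : xN k ξ ^ m * yN k ξ ∈ S := by simpa using mem m 1
  refine Submodule.eq_top_of_one_mem_of_mul_mem adjoin_xN_yN (by simpa using mem_x 0) ?_
  intro a ha g hg
  refine (Submodule.span_le (p := S.comap (LinearMap.mulRight k g))).2 ?_ ha
  rintro _ ⟨⟨m, n⟩, rfl⟩
  simp only [SetLike.mem_coe, Submodule.mem_comap, LinearMap.mulRight_apply, xyMonomial]
  rcases hg with rfl | rfl <;> fin_cases n <;> simp only [pow_zero, pow_one, mul_one]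
  · simpa [← pow_succ] using mem_x (m + 1)
  · rw [mul_assoc, yN_mul_xN, mul_smul_comm, ← mul_assoc, ← pow_succ]
    exact S.smul_mem _ (mem_xy _)
  · exact mem_xy m
  · rw [mul_assoc, ← sq, yN_sq hξ, mul_smul_comm, ← pow_add]
    exact S.smul_mem _ (mem_x _)

def matX (t : A) : Matrix (Fin 2) (Fin 2) A := Matrix.diagonal ![t, -t]

def matY (s : A) : Matrix (Fin 2) (Fin 2) A := !![0, 1; s, 0]

theorem matX_pow (t : A) (m : ℕ) : matX t ^ m = Matrix.diagonal ![t ^ m, (-t) ^ m] := by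
  rw [matX, Matrix.diagonal_pow]
  congr 1
  ext i
  fin_cases i <;> rfl

theorem matX_sq_add_smul_matY_sq {t s : A} (hs : t ^ 2 + (2 * ξ) • s = 0) :
    matX t ^ 2 + (2 * ξ) • matY s ^ 2 = 0 := by
  rw [matX_pow, sq (matY s)]
  ext i j
  fin_cases i <;> fin_cases j <;> simp [matY, hs]

theorem matX_mul_matY_add_matY_mul_matX (t s : A) :
    matX t * matY s + matY s * matX t = 0 := by
  ext i j
  fin_cases i <;> fin_cases j <;> simp [matX, matY, Matrix.vecMul_diagonal, mul_comm]

theorem matX_pow_four {t : A} (ht : t ^ 4 = 0) : matX t ^ 4 = 0 := by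
  ext i j
  fin_cases i <;> fin_cases j <;> simp [matX_pow, ht, Even.neg_pow (by decide : Even 4)]

def NAlg.toMatrix {t s : A} (ht : t ^ 4 = 0) (hs : t ^ 2 + (2 * ξ) • s = 0) :
    NAlg k ξ →ₐ[k] Matrix (Fin 2) (Fin 2) A :=
  RingQuot.liftAlgHom k ⟨FreeAlgebra.lift k fun | .x => matX t | .y => matY s, by
    rintro _ _ (_ | _ | _) <;>
      simp only [X, Y, FreeAlgebra.lift_ι_apply, map_add, map_mul, map_pow, map_smul, map_zero]
    exacts [matX_sq_add_smul_matY_sq hs, matX_mul_matY_add_matY_mul_matX t s, matX_pow_four ht]⟩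

theorem NAlg.toMatrix_xyMonomial_row_zero {t s : A} (ht : t ^ 4 = 0)
    (hs : t ^ 2 + (2 * ξ) • s = 0) (p : Fin 4 × Fin 2) :
    NAlg.toMatrix ht hs (xyMonomial k ξ p) 0 = Pi.single p.2 (t ^ (p.1 : ℕ)) := by
  have hx : NAlg.toMatrix ht hs (xN k ξ) = matX t := by
    rw [NAlg.toMatrix, xN, RingQuot.liftAlgHom_mkAlgHom_apply, X, FreeAlgebra.lift_ι_apply]
  have hy : NAlg.toMatrix ht hs (yN k ξ) = matY s := by
    rw [NAlg.toMatrix, yN, RingQuot.liftAlgHom_mkAlgHom_apply, Y, FreeAlgebra.lift_ι_apply]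
  obtain ⟨m, n⟩ := p
  rw [xyMonomial, map_mul, map_pow, map_pow, hx, hy, matX_pow]
  ext j
  fin_cases n <;> fin_cases j <;> simp [Matrix.diagonal_mul, matY]

theorem linearIndependent_xyMonomial (hξ : 2 * ξ ≠ 0) : LinearIndependent k (xyMonomial k ξ) := by
  have hX4 : (Polynomial.X ^ 4 : Polynomial k) ≠ 0 := pow_ne_zero _ Polynomial.X_ne_zero
  have ht : AdjoinRoot.root (Polynomial.X ^ 4 : Polynomial k) ^ 4 = 0 := by
    rw [← AdjoinRoot.mk_X, ← map_pow, AdjoinRoot.mk_self]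
  set t := AdjoinRoot.root (Polynomial.X ^ 4 : Polynomial k)
  have hs : t ^ 2 + (2 * ξ) • -((2 * ξ)⁻¹ • t ^ 2) = 0 := by
    rw [smul_neg, smul_inv_smul₀ hξ, add_neg_cancel]
  have hpow : LinearIndependent k fun m : Fin 4 => t ^ (m : ℕ) := by
    have := linearIndependent_pow (K := k) t
    rwa [AdjoinRoot.minpoly_root hX4, Polynomial.leadingCoeff_X_pow, inv_one, map_one, mul_one,
      Polynomial.natDegree_X_pow] at this
  refine LinearIndependent.of_comp ((LinearMap.proj 0).comp (NAlg.toMatrix ht hs).toLinearMap) ?_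
  convert hpow.pi_single_prod (κ := Fin 2) with p
  exact NAlg.toMatrix_xyMonomial_row_zero ht hs p

end

theorem stmt_10_general (k : Type) [Field k] [CharZero k] (ξ : k)
    (hξ : IsPrimitiveRoot ξ 4) :
    Module.finrank k (NAlg k ξ) = 8 ∧
    ∃ B : Module.Basis (Fin 4 × Fin 2) k (NAlg k ξ),
      ∀ (m : Fin 4) (n : Fin 2), B (m, n) = xN k ξ ^ (m : ℕ) * yN k ξ ^ (n : ℕ) := by
  have h2ξ : 2 * ξ ≠ 0 := mul_ne_zero two_ne_zero (hξ.ne_zero (by norm_num))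
  let B := Module.Basis.mk (linearIndependent_xyMonomial h2ξ) (span_xyMonomial_eq_top h2ξ).ge
  refine ⟨?_, B, fun m n => Module.Basis.mk_apply _ _ (m, n)⟩
  rw [Module.finrank_eq_card_basis B, Fintype.card_prod, Fintype.card_fin, Fintype.card_fin]

/-- The quotient of the free algebra on `x, y` by the relations
`x² + 2ξ·y² = 0`, `xy + yx = 0`, `x⁴ = 0` is 8-dimensional, with linear basis
`{xᵐ yⁿ : 0 ≤ m ≤ 3, 0 ≤ n ≤ 1}`. -/
theorem stmt_10 (k : Type) [Field k] [IsAlgClosed k] [CharZero k] (ξ : k)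
    (hξ : IsPrimitiveRoot ξ 4) :
    Module.finrank k (NAlg k ξ) = 8 ∧
    ∃ B : Module.Basis (Fin 4 × Fin 2) k (NAlg k ξ),
      ∀ (m : Fin 4) (n : Fin 2), B (m, n) = xN k ξ ^ (m : ℕ) * yN k ξ ^ (n : ℕ) :=
  stmt_10_general k ξ hξ

end
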